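/- (Theorem 1, part 1.) For every interpreted system with regular labelling IS with labelling λ over variables Var and every EHS⁺ formula φ over Var, there exist a finite variable set Var', a point-based labelling λ' : Var' → RE_G, and an EHSRE formula φ' over Var' such that, letting IS' be IS with labelling replaced by λ' (so that IS and IS' have the same model up to labelling, hence the same intervals), for every interval I: IS,I ⊨ φ (under EHS⁺ semantics with λ) if and only if IS',I ⊨ φ' (under EHSRE semantics with λ'). Concretely, one may take Var' = G, λ'(g) = the one-letter regular expression g for each configuration g ∈ G, and φ' the result of replacing each variable p in φ by the regular expression λ(p) read over the letters of Var'. -/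

import Mathlib

/-- The Halpern-Shoham interval modalities. -/
inductive HSMod : Type where
  | A | Abar | B | Bbar | D | Dbar | E | Ebar | L | Lbar | N | Nbar | O | Obar
  deriving DecidableEq

/-- Formulas of the logic EHS⁺ over agents `0,…,m` and propositional variables `V`. -/
inductive EHSFormula (m : ℕ) (V : Type) : Type where
  | pt : EHSFormula m V
  | prop : V → EHSFormula m V
  | neg : EHSFormula m V → EHSFormula m V
  | conj : EHSFormula m V → EHSFormula m V → EHSFormula m V
  | know : Fin (m + 1) → EHSFormula m V → EHSFormula m V
  | common : Finset (Fin (m + 1)) → EHSFormula m V → EHSFormula m V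
  | dia : HSMod → EHSFormula m V → EHSFormula m V
  deriving DecidableEq

/-- An interpreted system with regular labelling over agents `0,…,m` (agent `0` is the
environment) and variables `Var`. -/
structure ISRL (m : ℕ) (Var : Type) where
  L : Fin (m + 1) → Type
  finL : ∀ i, Fintype (L i)
  l0 : ∀ i, L i
  ACT : Fin (m + 1) → Type
  finACT : ∀ i, Fintype (ACT i)
  P : ∀ i, L i → Set (ACT i)
  T : ∀ i, L i → (∀ j, ACT j) → L i → Prop
  lab : Var → RegularExpression (∀ i, L i)

attribute [instance] ISRL.finL ISRL.finACT

namespace ISRL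

variable {m : ℕ} {Var : Type}

/-- Global configurations. -/
abbrev G (IS : ISRL m Var) : Type := ∀ i, IS.L i

instance (IS : ISRL m Var) : Fintype IS.G := Pi.instFintype

/-- The initial global configuration. -/
def g0 (IS : ISRL m Var) : IS.G := IS.l0

/-- The global transition relation `t^G`. -/
def tG (IS : ISRL m Var) (g g' : IS.G) : Prop :=
  ∃ a : ∀ j, IS.ACT j, ∀ i, a i ∈ IS.P i (g i) ∧ IS.T i (g i) a (g' i)

/-- A partial state: a nonempty `t^G`-chain of configurations. -/
def IsPState (IS : ISRL m Var) (w : List IS.G) : Prop :=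
  w ≠ [] ∧ w.Chain' IS.tG

/-- A global state of the model: a partial state starting at the initial configuration. -/
def IsState (IS : ISRL m Var) (w : List IS.G) : Prop :=
  IS.IsPState w ∧ w.head? = some IS.g0

/-- `g(s)`: the actual configuration of a (partial) state, i.e. its last configuration. -/
def gOf (IS : ISRL m Var) (w : List IS.G) : IS.G := w.getLastD IS.g0

/-- The global transition relation `t` of the model: extension by exactly one configuration. -/
def step (IS : ISRL m Var) (w w' : List IS.G) : Prop := ∃ g : IS.G, w' = w ++ [g]

/-- Epistemic indistinguishability of states for agent `i`. -/
def simS (IS : ISRL m Var) (i : Fin (m + 1)) (w w' : List IS.G) : Prop :=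
  IS.gOf w i = IS.gOf w' i

/-- An interval of the model: a nonempty `t`-path of global states. -/
def IsInterval (IS : ISRL m Var) (l : List (List IS.G)) : Prop :=
  l ≠ [] ∧ (∀ w ∈ l, IS.IsState w) ∧ l.Chain' IS.step

/-- Intervals of the model of `IS`. -/
structure Interval (IS : ISRL m Var) : Type where
  seq : List (List IS.G)
  isInterval : IS.IsInterval seq

namespace Interval

variable {IS : ISRL m Var}

/-- `first(I)`. -/
def first (I : Interval IS) : List IS.G := I.seq.headD []

/-- `last(I)`. -/
def last (I : Interval IS) : List IS.G := I.seq.getLastD []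

/-- `I` is a point interval. -/
def isPt (I : Interval IS) : Prop := I.seq.length = 1

/-- `g(I)`, the word of configurations read along `I`. -/
def gword (I : Interval IS) : List IS.G := I.seq.map IS.gOf

end Interval

section rels

variable {IS : ISRL m Var}

def relA (I I' : Interval IS) : Prop := I'.first = I.last
def relB (I I' : Interval IS) : Prop :=
  ∃ J : List (List IS.G), J ≠ [] ∧ I.seq = I'.seq ++ J
def relD (I I' : Interval IS) : Prop :=
  ∃ J K : List (List IS.G), J ≠ [] ∧ K ≠ [] ∧ I.seq = J ++ I'.seq ++ K
def relE (I I' : Interval IS) : Prop :=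
  ∃ J : List (List IS.G), J ≠ [] ∧ I.seq = J ++ I'.seq
def relL (I I' : Interval IS) : Prop := Relation.TransGen IS.step I.last I'.first
def relN (I I' : Interval IS) : Prop := IS.step I.last I'.first
def relO (I I' : Interval IS) : Prop :=
  ∃ J K : List (List IS.G), J ≠ [] ∧ K ≠ [] ∧ I.seq ++ J = K ++ I'.seq ∧
    IS.IsInterval (I.seq ++ J)

end rels

/-- The Allen relations on intervals of the model of `IS`. -/
def hsRel (IS : ISRL m Var) : HSMod → Interval IS → Interval IS → Prop
  | .A => fun I I' => relA I I'
  | .Abar => fun I I' => relA I' I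
  | .B => fun I I' => relB I I'
  | .Bbar => fun I I' => relB I' I
  | .D => fun I I' => relD I I'
  | .Dbar => fun I I' => relD I' I
  | .E => fun I I' => relE I I'
  | .Ebar => fun I I' => relE I' I
  | .L => fun I I' => relL I I'
  | .Lbar => fun I I' => relL I' I
  | .N => fun I I' => relN I I'
  | .Nbar => fun I I' => relN I' I
  | .O => fun I I' => relO I I'
  | .Obar => fun I I' => relO I' I

/-- Epistemic indistinguishability of intervals for agent `i`. -/
def simI (IS : ISRL m Var) (i : Fin (m + 1)) (I I' : Interval IS) : Prop :=
  List.Forall₂ (IS.simS i) I.seq I'.seq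

/-- `∼_Γ`: the transitive closure of the union of the `∼_i`, `i ∈ Γ`. -/
def simC (IS : ISRL m Var) (Γ : Finset (Fin (m + 1))) : Interval IS → Interval IS → Prop :=
  Relation.TransGen (fun I I' => ∃ i ∈ Γ, IS.simI i I I')

/-- Satisfaction of EHS⁺ formulas at an interval, with respect to a labelling `lab`. -/
def Sat (IS : ISRL m Var) {W : Type} (lab : W → RegularExpression IS.G) :
    EHSFormula m W → Interval IS → Prop
  | .pt, I => I.isPt
  | .prop p, I => I.gword ∈ (lab p).matches'
  | .neg φ, I => ¬ Sat IS lab φ I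
  | .conj φ ψ, I => Sat IS lab φ I ∧ Sat IS lab ψ I
  | .know i φ, I => ∀ I', IS.simI i I' I → Sat IS lab φ I'
  | .common Γ φ, I => ∀ I', IS.simC Γ I' I → Sat IS lab φ I'
  | .dia X φ, I => ∃ I', IS.hsRel X I I' ∧ Sat IS lab φ I'

end ISRL
/-- Formulas of the logic EHSRE: atoms are regular expressions over the alphabet `2^V`. -/
inductive EHSREFormula (m : ℕ) (V : Type) : Type where
  | pt : EHSREFormula m V
  | re : RegularExpression (Set V) → EHSREFormula m V
  | neg : EHSREFormula m V → EHSREFormula m V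
  | conj : EHSREFormula m V → EHSREFormula m V → EHSREFormula m V
  | know : Fin (m + 1) → EHSREFormula m V → EHSREFormula m V
  | common : Finset (Fin (m + 1)) → EHSREFormula m V → EHSREFormula m V
  | dia : HSMod → EHSREFormula m V → EHSREFormula m V

/-- The language over `β` denoted by a regular expression over `α`, where each letter
`a : α` is interpreted as the language `μ a`. -/
def reLang {α β : Type _} (μ : α → Language β) : RegularExpression α → Language β
  | .zero => 0
  | .epsilon => 1
  | .char a => μ a
  | .plus r s => reLang μ r + reLang μ s
  | .comp r s => reLang μ r * reLang μ s
  | .star r => KStar.kstar (reLang μ r)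

/-- A labelling is point-based if the language of each `lab v` consists of one-letter
words only (i.e. `lab v` denotes `Σ_{g ∈ S_v} g` for some set `S_v` of configurations). -/
def PointBased {G W : Type} (lab : W → RegularExpression G) : Prop :=
  ∀ v, ∀ w ∈ (lab v).matches', ∃ g : G, w = [g]

namespace ISRL

variable {m : ℕ} {Var : Type}

/-- The interpretation of a letter `Y ⊆ W` of an EHSRE atom, with respect to a point-based
labelling `lab`: the one-letter words `[g]` such that `{v | g ∈ S_v} = Y` (this is the
language of the regular expression substituted for `Y` in `λ∘r`). -/
def letterLang (IS : ISRL m Var) {W : Type} (lab : W → RegularExpression IS.G) (Y : Set W) :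
    Language IS.G :=
  {w | ∃ g : IS.G, w = [g] ∧ {v | [g] ∈ (lab v).matches'} = Y}

/-- Satisfaction of EHSRE formulas at an interval of the model of `IS`, with respect to a
(point-based) labelling `lab`: the atomic clause reads `M,I ⊨ r` iff `g(I) ∈ L(λ∘r)`. -/
def SatRE (IS : ISRL m Var) {W : Type} (lab : W → RegularExpression IS.G) :
    EHSREFormula m W → Interval IS → Prop
  | .pt, I => I.isPt
  | .re r, I => I.gword ∈ reLang (IS.letterLang lab) r
  | .neg φ, I => ¬ SatRE IS lab φ I
  | .conj φ ψ, I => SatRE IS lab φ I ∧ SatRE IS lab ψ I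
  | .know i φ, I => ∀ I', IS.simI i I' I → SatRE IS lab φ I'
  | .common Γ φ, I => ∀ I', IS.simC Γ I' I → SatRE IS lab φ I'
  | .dia X φ, I => ∃ I', IS.hsRel X I I' ∧ SatRE IS lab φ I'

end ISRL

/-! Take the configurations themselves as variables, labelled point-based by `λ'(g) = g`. Then
the letter `{g} ⊆ G` of an EHSRE atom denotes exactly the one-letter word `g`, so reading
`λ(p)` over the letters `{g}` gives an atom with the language of `λ(p)`; the other clauses of
the two semantics coincide. -/

theorem reLang_map {α β γ : Type _} (μ : β → Language γ) (f : α → β)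
    (r : RegularExpression α) : reLang μ (r.map f) = reLang (μ ∘ f) r := by
  induction r with
  | zero => rfl
  | epsilon => rfl
  | char a => rfl
  | plus r s ihr ihs => exact congrArg₂ (· + ·) ihr ihs
  | comp r s ihr ihs => exact congrArg₂ (· * ·) ihr ihs
  | star r ih => exact congrArg KStar.kstar ih

theorem reLang_singleton {α : Type _} (r : RegularExpression α) :
    reLang (fun a => ({[a]} : Language α)) r = r.matches' := by
  induction r with
  | zero => rfl
  | epsilon => rfl
  | char a => exact (RegularExpression.matches'_char a).symm
  | plus r s ihr ihs => exact congrArg₂ (· + ·) ihr ihs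
  | comp r s ihr ihs => exact congrArg₂ (· * ·) ihr ihs
  | star r ih => exact (congrArg KStar.kstar ih).trans (RegularExpression.matches'_star r).symm

theorem pointBased_char {G : Type} : PointBased (RegularExpression.char : G → _) := by
  intro g w hw
  rw [RegularExpression.matches'_char] at hw
  exact ⟨g, hw⟩

def EHSFormula.toEHSRE {m : ℕ} {Var G : Type} (lab : Var → RegularExpression G) :
    EHSFormula m Var → EHSREFormula m G
  | .pt => .pt
  | .prop p => .re ((lab p).map fun g => {g})
  | .neg φ => .neg (toEHSRE lab φ)
  | .conj φ ψ => .conj (toEHSRE lab φ) (toEHSRE lab ψ)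
  | .know i φ => .know i (toEHSRE lab φ)
  | .common Γ φ => .common Γ (toEHSRE lab φ)
  | .dia X φ => .dia X (toEHSRE lab φ)

namespace ISRL

variable {m : ℕ} {Var : Type} (IS : ISRL m Var)

theorem letterLang_char_singleton (g : IS.G) :
    IS.letterLang RegularExpression.char {g} = {[g]} := by
  have hsupport : ∀ h : IS.G, {v | [h] ∈ (RegularExpression.char v).matches'} = {h} := by
    intro h
    ext v
    rw [Set.mem_ofPred_eq, RegularExpression.matches'_char]
    exact List.singleton_inj.trans eq_comm
  ext w
  show (∃ h, w = [h] ∧ _ = _) ↔ w = [g]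
  simp only [hsupport, Set.singleton_eq_singleton_iff, exists_eq_right]

theorem reLang_letterLang_char_map_singleton (r : RegularExpression IS.G) :
    reLang (IS.letterLang RegularExpression.char) (r.map fun g => {g}) = r.matches' := by
  rw [reLang_map, ← reLang_singleton r]
  exact congrArg (reLang · r) (funext IS.letterLang_char_singleton)

theorem sat_iff_satRE_toEHSRE {W : Type} (lab : W → RegularExpression IS.G)
    (φ : EHSFormula m W) (I : Interval IS) :
    Sat IS lab φ I ↔ SatRE IS RegularExpression.char (φ.toEHSRE lab) I := by
  induction φ generalizing I with
  | pt => exact Iff.rfl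
  | prop p =>
    show _ ↔ I.gword ∈ reLang _ _
    rw [reLang_letterLang_char_map_singleton]
    exact Iff.rfl
  | neg φ ih => exact not_congr (ih I)
  | conj φ ψ ihφ ihψ => exact and_congr (ihφ I) (ihψ I)
  | know i φ ih => exact forall_congr' fun I' => imp_congr Iff.rfl (ih I')
  | common Γ φ ih => exact forall_congr' fun I' => imp_congr Iff.rfl (ih I')
  | dia X φ ih => exact exists_congr fun I' => and_congr Iff.rfl (ih I')

end ISRL

open ISRL in
theorem stmt2 {m : ℕ} {Var : Type} (IS : ISRL m Var) (φ : EHSFormula m Var) :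
    ∃ (Var' : Type) (_ : Fintype Var') (lab' : Var' → RegularExpression IS.G)
      (φ' : EHSREFormula m Var'),
      PointBased lab' ∧
      ∀ I : ISRL.Interval IS, Sat IS IS.lab φ I ↔ SatRE IS lab' φ' I :=
  ⟨IS.G, inferInstance, RegularExpression.char, φ.toEHSRE IS.lab, pointBased_char,
    IS.sat_iff_satRE_toEHSRE IS.lab φ⟩
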